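/- Let d ≥ 1 and let v ∈ ℝ^d with 0 < ‖v‖ < 1. Then the matrix D(v) − v ⊗ v is positive semidefinite: for every w ∈ ℝ^d, ⟨w, D(v)w⟩ − ⟨v, w⟩² ≥ 0. (Equivalently, for a realizable state (ψ⁰, ψ¹) with v = ψ¹/ψ⁰, the reconstructed second moment ψ² = D(v)ψ⁰ satisfies ψ² − (ψ¹ ⊗ ψ¹)/ψ⁰ ⪰ 0.) -/

import Mathlib

/-- The Eddington factor `χ(f) = (3 + 4f²)/(5 + 2√(4 − 3f²))` of the M₁ closure. -/
noncomputable def eddingtonFactor (f : ℝ) : ℝ :=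
  (3 + 4 * f ^ 2) / (5 + 2 * Real.sqrt (4 - 3 * f ^ 2))

/-- The Eddington tensor
`D(v) = ((1 − χ(‖v‖))/2) I_d + ((3χ(‖v‖) − 1)/2) (v ⊗ v)/‖v‖²`
as a `d × d` real matrix, for `v ∈ ℝ^d = EuclideanSpace ℝ (Fin d)`. -/
noncomputable def eddingtonTensor (d : ℕ) (v : EuclideanSpace ℝ (Fin d)) :
    Matrix (Fin d) (Fin d) ℝ :=
  ((1 - eddingtonFactor ‖v‖) / 2) • (1 : Matrix (Fin d) (Fin d) ℝ) +
    ((3 * eddingtonFactor ‖v‖ - 1) / 2 / ‖v‖ ^ 2) • Matrix.of (fun i j => v i * v j)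

/-!
On the line spanned by `v` the tensor `D(v)` acts as `χ(‖v‖)`, and on its orthogonal complement as
`(1 − χ(‖v‖))/2`. Hence `D(v) − v ⊗ v` is positive semidefinite exactly when `‖v‖² ≤ χ(‖v‖) ≤ 1`,
the two bounds on the Eddington factor. In coordinates, with `r = ‖v‖`, `P = ⟨v, w⟩`, `W = ‖w‖²`,
`2r² (⟨w, D(v)w⟩ − P²) = (1 − χ)(r²W − P²) + 2(χ − r²)P²`, and Cauchy–Schwarz gives `P² ≤ r²W`.
-/

open Matrix RealInnerProductSpace

lemma sq_le_eddingtonFactor {f : ℝ} (hf : f ^ 2 ≤ 1) : f ^ 2 ≤ eddingtonFactor f := by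
  have hs : 1 ≤ √(4 - 3 * f ^ 2) := Real.one_le_sqrt.mpr (by linarith)
  have hs_sq : √(4 - 3 * f ^ 2) ^ 2 = 4 - 3 * f ^ 2 := Real.sq_sqrt (by linarith)
  rw [eddingtonFactor, le_div_iff₀ (by positivity)]
  nlinarith

lemma eddingtonFactor_le_one {f : ℝ} (hf : f ^ 2 ≤ 1) : eddingtonFactor f ≤ 1 := by
  have hs : 1 ≤ √(4 - 3 * f ^ 2) := Real.one_le_sqrt.mpr (by linarith)
  rw [eddingtonFactor, div_le_one (by positivity)]
  linarith

lemma inner_smul_one_add_smul_vecMulVec_mulVec {ι : Type*} [Fintype ι] [DecidableEq ι]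
    (a b : ℝ) (v w : EuclideanSpace ℝ ι) :
    ⟪w, WithLp.toLp 2 ((a • (1 : Matrix ι ι ℝ) + b • vecMulVec v v) *ᵥ w)⟫ =
      a * ‖w‖ ^ 2 + b * ⟪v, w⟫ ^ 2 := by
  have hmulVec : WithLp.toLp 2 ((a • (1 : Matrix ι ι ℝ) + b • vecMulVec v v) *ᵥ w) =
      a • w + (b * ⟪v, w⟫) • v := by
    ext i
    simp [add_mulVec, smul_mulVec, vecMulVec_mulVec, EuclideanSpace.inner_eq_star_dotProduct,
      dotProduct_comm, mul_assoc]
  rw [hmulVec, inner_add_right, real_inner_smul_right, real_inner_smul_right,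
    real_inner_self_eq_norm_sq, real_inner_comm w v]
  ring

lemma inner_eddingtonTensor_mulVec (d : ℕ) (v w : EuclideanSpace ℝ (Fin d)) :
    ⟪w, WithLp.toLp 2 (eddingtonTensor d v *ᵥ w)⟫ =
      (1 - eddingtonFactor ‖v‖) / 2 * ‖w‖ ^ 2 +
        (3 * eddingtonFactor ‖v‖ - 1) / 2 / ‖v‖ ^ 2 * ⟪v, w⟫ ^ 2 :=
  inner_smul_one_add_smul_vecMulVec_mulVec _ _ v w

lemma eddington_quadForm_sub_sq_nonneg {χ r W P : ℝ} (hr : 0 < r) (hχr : r ^ 2 ≤ χ) (hχ : χ ≤ 1)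
    (hP : P ^ 2 ≤ r ^ 2 * W) :
    0 ≤ (1 - χ) / 2 * W + (3 * χ - 1) / 2 / r ^ 2 * P ^ 2 - P ^ 2 := by
  have hdecomp : (1 - χ) / 2 * W + (3 * χ - 1) / 2 / r ^ 2 * P ^ 2 - P ^ 2 =
      ((1 - χ) * (r ^ 2 * W - P ^ 2) + 2 * (χ - r ^ 2) * P ^ 2) / (2 * r ^ 2) := by
    field_simp
    ring
  have h_perp := mul_nonneg (sub_nonneg.2 hχ) (sub_nonneg.2 hP)
  have h_par := mul_nonneg (sub_nonneg.2 hχr) (sq_nonneg P)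
  rw [hdecomp]
  positivity

theorem eddingtonTensor_sub_outer_posSemidef_general (d : ℕ)
    (v : EuclideanSpace ℝ (Fin d)) (hv0 : 0 < ‖v‖) (hv1 : ‖v‖ < 1) :
    ∀ w : EuclideanSpace ℝ (Fin d),
      0 ≤ inner (𝕜 := ℝ) w (WithLp.toLp 2 ((eddingtonTensor d v).mulVec w) : EuclideanSpace ℝ (Fin d)) -
            (inner (𝕜 := ℝ) v w) ^ 2 := by
  intro w
  have hv_sq : ‖v‖ ^ 2 ≤ 1 := pow_le_one₀ (norm_nonneg v) hv1.le
  have hCS : ⟪v, w⟫ ^ 2 ≤ ‖v‖ ^ 2 * ‖w‖ ^ 2 := by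
    rw [← mul_pow]
    exact sq_le_sq' (neg_le_of_abs_le (abs_real_inner_le_norm v w)) (real_inner_le_norm v w)
  rw [inner_eddingtonTensor_mulVec]
  exact eddington_quadForm_sub_sq_nonneg hv0 (sq_le_eddingtonFactor hv_sq)
    (eddingtonFactor_le_one hv_sq) hCS

/-- For `0 < ‖v‖ < 1`, the matrix `D(v) − v ⊗ v` is positive semidefinite:
`⟨w, D(v)w⟩ − ⟨v, w⟩² ≥ 0` for every `w ∈ ℝ^d`. -/
theorem eddingtonTensor_sub_outer_posSemidef (d : ℕ) (hd : 1 ≤ d)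
    (v : EuclideanSpace ℝ (Fin d)) (hv0 : 0 < ‖v‖) (hv1 : ‖v‖ < 1) :
    ∀ w : EuclideanSpace ℝ (Fin d),
      0 ≤ inner (𝕜 := ℝ) w (WithLp.toLp 2 ((eddingtonTensor d v).mulVec w) : EuclideanSpace ℝ (Fin d)) -
            (inner (𝕜 := ℝ) v w) ^ 2 :=
  eddingtonTensor_sub_outer_posSemidef_general d v hv0 hv1
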